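/- arXiv:1910.01429 — 4 statements merged into one kernel-verified Lean document; each statement's English description precedes it below -/
import Mathlib

section
/- For j ∈ {1,2}, let T_j be strongly continuous semigroups on X, let B be a bounded linear operator on X, let τ > 0, and define Δ_{τ,j} := T_j(τ) + ∫₀^τ T_j(s)B ds. For a given κ > 0, suppose κΔ_{τ,1} is power stable. Then there exists ε > 0 such that whenever ‖T₁(t) − T₂(t)‖ < ε for all t ∈ [0, τ], the operator κΔ_{τ,2} is also power stable. -/
open MeasureTheory Filter Set
open scoped Topology Real

variable {X : Type*}

/-- A strongly continuous (C₀) semigroup on a Banach space `X`. -/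
def IsC0Semigroup [NormedAddCommGroup X] [NormedSpace ℂ X]
    (T : ℝ → X →L[ℂ] X) : Prop :=
  T 0 = 1 ∧
  (∀ t s : ℝ, 0 ≤ t → 0 ≤ s → T (t + s) = (T t).comp (T s)) ∧
  (∀ x : X, ContinuousOn (fun t => T t x) (Set.Ici (0 : ℝ)))

/-- `A`, with domain `domA`, is the generator of the semigroup `T`. -/
def IsGenerator [NormedAddCommGroup X] [NormedSpace ℂ X]
    (T : ℝ → X →L[ℂ] X) (domA : Set X) (A : X → X) : Prop :=
  (∀ x : X, x ∈ domA ↔ ∃ y : X,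
      Tendsto (fun t : ℝ => t⁻¹ • (T t x - x)) (𝓝[>] (0 : ℝ)) (𝓝 y)) ∧
  (∀ x ∈ domA,
      Tendsto (fun t : ℝ => t⁻¹ • (T t x - x)) (𝓝[>] (0 : ℝ)) (𝓝 (A x)))

/-- Power stability of a bounded operator. -/
def PowerStable [NormedAddCommGroup X] [NormedSpace ℂ X] (Δ : X →L[ℂ] X) : Prop :=
  ∃ M : ℝ, 1 ≤ M ∧ ∃ θ : ℝ, θ ∈ Set.Ioo (0 : ℝ) 1 ∧ ∀ k : ℕ, ‖Δ ^ k‖ ≤ M * θ ^ k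

/-- `x` is the sampled-data solution with initial state `x0`. -/
def IsSdSolution [NormedAddCommGroup X] [NormedSpace ℂ X]
    (T : ℝ → X →L[ℂ] X) (B : X →L[ℂ] X) (τ : ℝ) (x0 : X) (x : ℝ → X) : Prop :=
  x 0 = x0 ∧
  ∀ (k : ℕ) (t : ℝ), 0 < t → t ≤ τ →
    x (k * τ + t) = T t (x (k * τ)) + ∫ s in (0 : ℝ)..t, T s (B (x (k * τ)))

/-- The sampled-data system is exponentially stable with decay rate greater than `ω`. -/
def SdExpStable [NormedAddCommGroup X] [NormedSpace ℂ X]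
    (T : ℝ → X →L[ℂ] X) (B : X →L[ℂ] X) (τ ω : ℝ) : Prop :=
  ∃ M : ℝ, 1 ≤ M ∧ ∃ ω' : ℝ, ω < ω' ∧
    ∀ (x0 : X) (x : ℝ → X), IsSdSolution T B τ x0 x →
      ∀ t : ℝ, 0 ≤ t → ‖x t‖ ≤ M * Real.exp (-ω' * t) * ‖x0‖


section AuxPowerStability

variable [NormedAddCommGroup X] [NormedSpace ℂ X] [CompleteSpace X]

omit [CompleteSpace X] in
lemma aux_cl_norm_one_le : ‖(1 : X →L[ℂ] X)‖ ≤ 1 := by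
  simpa [ContinuousLinearMap.one_def] using ContinuousLinearMap.norm_id_le

omit [CompleteSpace X] in
lemma aux_cl_norm_pow_le (a : X →L[ℂ] X) (C : ℝ) (hC : 1 ≤ C) (ha : ‖a‖ ≤ C) :
    ∀ n : ℕ, ‖a ^ n‖ ≤ C ^ n := by
  intro n
  induction n with
  | zero => simpa using aux_cl_norm_one_le
  | succ m ih =>
    rw [pow_succ, pow_succ]
    exact le_trans (norm_mul_le _ _)
      (mul_le_mul ih ha (norm_nonneg _) (by positivity))

omit [CompleteSpace X] in
lemma aux_cl_pow_sub_pow (P Q : X →L[ℂ] X) (C : ℝ) (hC : 1 ≤ C)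
    (hP : ‖P‖ ≤ C) (hQ : ‖Q‖ ≤ C) :
    ∀ n : ℕ, ‖Q ^ n - P ^ n‖ ≤ n * C ^ (n - 1) * ‖Q - P‖ := by
  intro n
  induction n with
  | zero => simp
  | succ m ih =>
    have hid : Q ^ (m + 1) - P ^ (m + 1) = Q * (Q ^ m - P ^ m) + (Q - P) * P ^ m := by
      rw [mul_sub, sub_mul, pow_succ', pow_succ']
      abel
    have h1 : ‖Q ^ (m + 1) - P ^ (m + 1)‖
        ≤ C * (m * C ^ (m - 1) * ‖Q - P‖) + ‖Q - P‖ * C ^ m := by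
      rw [hid]
      refine le_trans (norm_add_le _ _) (add_le_add ?_ ?_)
      · exact le_trans (norm_mul_le _ _)
          (mul_le_mul hQ ih (norm_nonneg _) (by linarith))
      · exact le_trans (norm_mul_le _ _)
          (mul_le_mul_of_nonneg_left (aux_cl_norm_pow_le P C hC hP m) (norm_nonneg _))
    refine le_trans h1 ?_
    rcases Nat.eq_zero_or_pos m with hm | hm
    · subst hm; simp
    · obtain ⟨j, rfl⟩ := Nat.exists_eq_succ_of_ne_zero hm.ne'
      have heq : C * ((↑(j+1) : ℝ) * C ^ ((j+1) - 1) * ‖Q - P‖) + ‖Q - P‖ * C ^ (j+1)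
          = (↑(j+1+1) : ℝ) * C ^ ((j+1+1) - 1) * ‖Q - P‖ := by
        simp only [Nat.add_sub_cancel]
        rw [pow_succ']
        push_cast
        ring
      rw [heq]

omit [CompleteSpace X] in
lemma aux_powerStable_of_pow (Q : X →L[ℂ] X) (N : ℕ) (hN : 0 < N) (h : ‖Q ^ N‖ < 1) :
    PowerStable Q := by
  set c : ℝ := max ‖Q ^ N‖ (1/2) with hc_def
  have hc0 : 0 < c := lt_of_lt_of_le (by norm_num) (le_max_right _ _)
  have hc1 : c < 1 := max_lt h (by norm_num)
  have hQN : ‖Q ^ N‖ ≤ c := le_max_left _ _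
  set θ : ℝ := c ^ ((N : ℝ)⁻¹) with hθ_def
  have hθ0 : 0 < θ := Real.rpow_pos_of_pos hc0 _
  have hNne : ((N : ℝ)) ≠ 0 := Nat.cast_ne_zero.mpr hN.ne'
  have hθ1 : θ < 1 := Real.rpow_lt_one hc0.le hc1 (by positivity)
  have hθN : θ ^ N = c := by
    rw [hθ_def, ← Real.rpow_natCast (c ^ ((N : ℝ)⁻¹)) N, ← Real.rpow_mul hc0.le,
      inv_mul_cancel₀ hNne, Real.rpow_one]
  set K : ℝ := max 1 ‖Q‖ with hK_def
  have hK1 : (1 : ℝ) ≤ K := le_max_left _ _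
  have hKN : (1 : ℝ) ≤ K ^ N := by
    calc (1 : ℝ) = 1 ^ N := (one_pow N).symm
      _ ≤ K ^ N := pow_le_pow_left₀ zero_le_one hK1 N
  refine ⟨K ^ N / θ ^ N, ?_, θ, ⟨hθ0, hθ1⟩, ?_⟩
  · rw [hθN, one_le_div hc0]
    exact hc1.le.trans hKN
  · intro k
    obtain ⟨q, r, hrN, hk⟩ : ∃ q r, r < N ∧ N * q + r = k :=
      ⟨k / N, k % N, Nat.mod_lt _ hN, Nat.div_add_mod k N⟩
    have hQpow : ∀ m : ℕ, ‖(Q ^ N) ^ m‖ ≤ c ^ m := by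
      intro m
      induction m with
      | zero => simpa using aux_cl_norm_one_le
      | succ i ih =>
        rw [pow_succ, pow_succ]
        exact le_trans (norm_mul_le _ _)
          (mul_le_mul ih hQN (norm_nonneg _) (by positivity))
    have hQr : ‖Q ^ r‖ ≤ K ^ N :=
      (aux_cl_norm_pow_le Q K hK1 (le_max_right _ _) r).trans
        (pow_le_pow_right₀ hK1 hrN.le)
    have hθk : θ ^ k = c ^ q * θ ^ r := by
      rw [← hk, pow_add, pow_mul, hθN]
    have hcr : c ≤ θ ^ r := by
      calc c = θ ^ N := hθN.symm
        _ ≤ θ ^ r := pow_le_pow_of_le_one hθ0.le hθ1.le hrN.le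
    calc ‖Q ^ k‖ = ‖(Q ^ N) ^ q * Q ^ r‖ := by rw [← pow_mul, ← pow_add, hk]
      _ ≤ ‖(Q ^ N) ^ q‖ * ‖Q ^ r‖ := norm_mul_le _ _
      _ ≤ c ^ q * K ^ N := mul_le_mul (hQpow q) hQr (norm_nonneg _) (by positivity)
      _ = (K ^ N / c) * (c ^ q * c) := by field_simp
      _ ≤ (K ^ N / c) * (c ^ q * θ ^ r) := by
          have h2 := mul_le_mul_of_nonneg_left hcr (pow_nonneg hc0.le q)
          exact mul_le_mul_of_nonneg_left h2 (by positivity)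
      _ = K ^ N / θ ^ N * θ ^ k := by rw [hθN, hθk]

end AuxPowerStability

/-- If `κ Δ_{τ,1}` is power stable, then `κ Δ_{τ,2}` is power stable whenever the
two semigroups are uniformly close enough on `[0,τ]`. -/
theorem power_stability_of_close_semigroups
    [NormedAddCommGroup X] [NormedSpace ℂ X] [CompleteSpace X]
    (T₁ T₂ : ℝ → X →L[ℂ] X) (hT₁ : IsC0Semigroup T₁) (hT₂ : IsC0Semigroup T₂)
    (B : X →L[ℂ] X) (τ : ℝ) (hτ : 0 < τ)
    (Δ₁ Δ₂ : X →L[ℂ] X)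
    (hΔ₁ : ∀ x : X, Δ₁ x = T₁ τ x + ∫ s in (0 : ℝ)..τ, T₁ s (B x))
    (hΔ₂ : ∀ x : X, Δ₂ x = T₂ τ x + ∫ s in (0 : ℝ)..τ, T₂ s (B x))
    (κ : ℝ) (hκ : 0 < κ) (h : PowerStable (κ • Δ₁)) :
    ∃ ε : ℝ, 0 < ε ∧
      ((∀ t ∈ Set.Icc (0 : ℝ) τ, ‖T₁ t - T₂ t‖ < ε) → PowerStable (κ • Δ₂)) := by
  obtain ⟨M, hM1, θ, ⟨hθ0, hθ1⟩, hMθ⟩ := h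
  have hM0 : (0 : ℝ) < M := lt_of_lt_of_le one_pos hM1
  -- choose N with M * θ ^ N < 1/2
  obtain ⟨n, hn⟩ : ∃ n : ℕ, θ ^ n < 1 / (2 * M) :=
    exists_pow_lt_of_lt_one (by positivity) hθ1
  set N : ℕ := n + 1 with hN_def
  have hNpos : 0 < N := Nat.succ_pos n
  have hθN : θ ^ N < 1 / (2 * M) :=
    lt_of_le_of_lt (pow_le_pow_of_le_one hθ0.le hθ1.le (Nat.le_succ n)) hn
  have hPN : ‖(κ • Δ₁ : X →L[ℂ] X) ^ N‖ < 1 / 2 := by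
    calc ‖(κ • Δ₁ : X →L[ℂ] X) ^ N‖ ≤ M * θ ^ N := hMθ N
      _ < M * (1 / (2 * M)) := by
          exact mul_lt_mul_of_pos_left hθN hM0
      _ = 1 / 2 := by field_simp
  set P : X →L[ℂ] X := κ • Δ₁ with hP_def
  set C : ℝ := ‖P‖ + 1 with hC_def
  have hC1 : (1 : ℝ) ≤ C := by
    have := norm_nonneg P
    simp only [hC_def]; linarith
  have hC0 : (0 : ℝ) < C := lt_of_lt_of_le one_pos hC1
  have hCN : (1 : ℝ) ≤ C ^ (N - 1) := by
    calc (1 : ℝ) = 1 ^ (N - 1) := (one_pow _).symm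
      _ ≤ C ^ (N - 1) := pow_le_pow_left₀ zero_le_one hC1 _
  set D : ℝ := κ * (1 + τ * ‖B‖) with hD_def
  have hD0 : (0 : ℝ) < D := by
    have := norm_nonneg B
    have h1 : (0 : ℝ) < 1 + τ * ‖B‖ := by positivity
    exact mul_pos hκ h1
  set ε : ℝ := 1 / (4 * N * C ^ (N - 1) * D) with hε_def
  have hden : (0 : ℝ) < 4 * N * C ^ (N - 1) * D := by
    have hNc : (0 : ℝ) < (N : ℝ) := Nat.cast_pos.mpr hNpos
    positivity
  have hε0 : 0 < ε := by rw [hε_def]; positivity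
  refine ⟨ε, hε0, ?_⟩
  intro hclose
  -- bound on the difference of the discrete operators
  have hptwise : ∀ x : X, ‖Δ₂ x - Δ₁ x‖ ≤ ε * (1 + τ * ‖B‖) * ‖x‖ := by
    intro x
    have huIcc : Set.uIcc (0 : ℝ) τ = Set.Icc 0 τ := Set.uIcc_of_le hτ.le
    have hi1 : IntervalIntegrable (fun s => T₁ s (B x)) volume 0 τ := by
      apply ContinuousOn.intervalIntegrable
      rw [huIcc]
      exact (hT₁.2.2 (B x)).mono Set.Icc_subset_Ici_self
    have hi2 : IntervalIntegrable (fun s => T₂ s (B x)) volume 0 τ := by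
      apply ContinuousOn.intervalIntegrable
      rw [huIcc]
      exact (hT₂.2.2 (B x)).mono Set.Icc_subset_Ici_self
    have key : Δ₂ x - Δ₁ x
        = (T₂ τ - T₁ τ) x + ∫ s in (0 : ℝ)..τ, (T₂ s (B x) - T₁ s (B x)) := by
      rw [hΔ₁, hΔ₂, intervalIntegral.integral_sub hi2 hi1,
        ContinuousLinearMap.sub_apply]
      abel
    have hIb : ‖∫ s in (0 : ℝ)..τ, (T₂ s (B x) - T₁ s (B x))‖
        ≤ ε * (‖B‖ * ‖x‖) * |τ - 0| := by
      apply intervalIntegral.norm_integral_le_of_norm_le_const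
      intro s hs
      rw [Set.uIoc_of_le hτ.le] at hs
      have hs' : s ∈ Set.Icc (0 : ℝ) τ := ⟨hs.1.le, hs.2⟩
      have h1 : ‖T₂ s (B x) - T₁ s (B x)‖ = ‖(T₁ s - T₂ s) (B x)‖ := by
        rw [ContinuousLinearMap.sub_apply, norm_sub_rev]
      rw [h1]
      calc ‖(T₁ s - T₂ s) (B x)‖ ≤ ‖T₁ s - T₂ s‖ * ‖B x‖ :=
            ContinuousLinearMap.le_opNorm _ _
        _ ≤ ε * (‖B‖ * ‖x‖) :=
            mul_le_mul (hclose s hs').le (B.le_opNorm x) (norm_nonneg _) hε0.le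
    have h2 : ‖(T₂ τ - T₁ τ) x‖ ≤ ε * ‖x‖ := by
      calc ‖(T₂ τ - T₁ τ) x‖ ≤ ‖T₂ τ - T₁ τ‖ * ‖x‖ := ContinuousLinearMap.le_opNorm _ _
        _ ≤ ε * ‖x‖ := by
            rw [norm_sub_rev]
            exact mul_le_mul_of_nonneg_right (hclose τ ⟨hτ.le, le_refl τ⟩).le (norm_nonneg x)
    rw [key]
    calc ‖(T₂ τ - T₁ τ) x + ∫ s in (0:ℝ)..τ, (T₂ s (B x) - T₁ s (B x))‖
        ≤ ‖(T₂ τ - T₁ τ) x‖ + ‖∫ s in (0:ℝ)..τ, (T₂ s (B x) - T₁ s (B x))‖ :=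
          norm_add_le _ _
      _ ≤ ε * ‖x‖ + ε * (‖B‖ * ‖x‖) * |τ - 0| := add_le_add h2 hIb
      _ = ε * (1 + τ * ‖B‖) * ‖x‖ := by
          rw [sub_zero, abs_of_pos hτ]; ring
  set Q : X →L[ℂ] X := κ • Δ₂ with hQ_def
  have hQP : ‖Q - P‖ ≤ D * ε := by
    have hsub : Q - P = κ • (Δ₂ - Δ₁) := (smul_sub κ Δ₂ Δ₁).symm
    rw [hsub]
    apply ContinuousLinearMap.opNorm_le_bound _ (by positivity)
    intro x
    rw [ContinuousLinearMap.smul_apply, norm_smul, Real.norm_eq_abs, abs_of_pos hκ]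
    calc κ * ‖(Δ₂ - Δ₁) x‖ ≤ κ * (ε * (1 + τ * ‖B‖) * ‖x‖) := by
          apply mul_le_mul_of_nonneg_left _ hκ.le
          rw [ContinuousLinearMap.sub_apply]
          exact hptwise x
      _ = D * ε * ‖x‖ := by rw [hD_def]; ring
  have hDε : D * ε = 1 / (4 * N * C ^ (N - 1)) := by
    rw [hε_def]
    field_simp
  have hNC1 : (1 : ℝ) ≤ 4 * N * C ^ (N - 1) := by
    have hN1 : (1 : ℝ) ≤ (N : ℝ) := by exact_mod_cast hNpos
    nlinarith
  have hQPle1 : ‖Q - P‖ ≤ 1 := by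
    rw [hDε] at hQP
    refine hQP.trans ?_
    rw [div_le_one (by linarith)]
    exact hNC1
  have hQC : ‖Q‖ ≤ C := by
    calc ‖Q‖ = ‖P + (Q - P)‖ := by rw [add_sub_cancel]
      _ ≤ ‖P‖ + ‖Q - P‖ := norm_add_le _ _
      _ ≤ ‖P‖ + 1 := by linarith
  have hPC : ‖P‖ ≤ C := by rw [hC_def]; linarith
  have hdiffN : ‖Q ^ N - P ^ N‖ ≤ 1 / 4 := by
    calc ‖Q ^ N - P ^ N‖ ≤ N * C ^ (N - 1) * ‖Q - P‖ :=
          aux_cl_pow_sub_pow P Q C hC1 hPC hQC N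
      _ ≤ N * C ^ (N - 1) * (D * ε) := by
          apply mul_le_mul_of_nonneg_left hQP
          have hNc : (0 : ℝ) ≤ (N : ℝ) := Nat.cast_nonneg N
          positivity
      _ ≤ 1 / 4 := by
          rw [hDε]
          have hNc : (0 : ℝ) < (N : ℝ) := Nat.cast_pos.mpr hNpos
          have hcp : (0 : ℝ) < C ^ (N - 1) := by positivity
          have heq : (N : ℝ) * C ^ (N - 1) * (1 / (4 * N * C ^ (N - 1)))
              = 1 / 4 := by
            field_simp
          rw [heq]
  have hQN : ‖Q ^ N‖ < 1 := by
    calc ‖Q ^ N‖ = ‖P ^ N + (Q ^ N - P ^ N)‖ := by rw [add_sub_cancel]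
      _ ≤ ‖P ^ N‖ + ‖Q ^ N - P ^ N‖ := norm_add_le _ _
      _ < 1 / 2 + 1 / 4 := add_lt_add_of_lt_of_le hPN hdiffN
      _ < 1 := by norm_num
  exact aux_powerStable_of_pow Q N hNpos hQN
end

section
/- Let A be the generator of a strongly continuous semigroup T(t) on a Banach space X and choose t₀ > 0 arbitrarily. For every ε, τ > 0 there exists q ∈ (0,1) such that for every bounded linear operator D : X₁ → X satisfying ∫₀^{t₀} ‖D T(s)x‖ ds ≤ q‖x‖ for all x ∈ dom(A), the perturbed semigroup T_D generated by A + D satisfies ‖T(t) − T_D(t)‖ < ε for all t ∈ [0, τ]. -/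
/-!
For `x ∈ dom A`, differentiating `u ↦ T_D(u) T(t - u) x` gives the variation of parameters formula
`T_D(t) x - T(t) x = ∫₀ᵗ T_D(u) D T(t - u) x du`. Chaining the Miyadera–Voigt condition over
`n = ⌈τ / t₀⌉` blocks of length `t₀` gives `∫₀ᵗ ‖D T(s) x‖ ds ≤ n q M ‖x‖` for `t ≤ τ`, where
`M` bounds `‖T‖` on `[0, n t₀]`. By density of `dom A` this yields `‖T(t) - T_D(t)‖ ≤ N J` with
`J = n q M` and `N` the least bound of `‖T_D‖` on `[0, τ]`. Then `N ≤ M + N J`, so `N ≤ 2 M` once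
`J ≤ 1/2`, and `‖T(t) - T_D(t)‖ ≤ 2 M J`, which is small together with `q`.
-/

open MeasureTheory Filter Set
open scoped Topology Real

variable {X : Type*}

/-- `D` is a bounded linear operator from `X₁ = (dom A, ‖·‖ + ‖A ·‖)` to `X`,
represented as a function on `X` that is linear and graph-norm bounded on `dom A`. -/
def IsGraphBoundedOp [NormedAddCommGroup X] [NormedSpace ℂ X]
    (domA : Set X) (A : X → X) (D : X → X) : Prop :=
  (∀ x ∈ domA, ∀ y ∈ domA, D (x + y) = D x + D y) ∧
  (∀ (c : ℂ), ∀ x ∈ domA, D (c • x) = c • D x) ∧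
  (∃ C : ℝ, ∀ x ∈ domA, ‖D x‖ ≤ C * (‖x‖ + ‖A x‖))

theorem hasDerivWithinAt_Ioi_iff_tendsto_slope_zero {E : Type*} [NormedAddCommGroup E]
    [NormedSpace ℝ E] {f : ℝ → E} {f' : E} {a : ℝ} :
    HasDerivWithinAt f f' (Ioi a) a ↔
      Tendsto (fun h => h⁻¹ • (f (a + h) - f a)) (𝓝[>] 0) (𝓝 f') := by
  have : 𝓝[>] a = map (a + ·) (𝓝[>] 0) := by
    rw [← Homeomorph.coe_addLeft, (Homeomorph.addLeft a).isEmbedding.map_nhdsWithin_eq]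
    simp
  rw [hasDerivWithinAt_iff_tendsto_slope' self_notMem_Ioi, this, tendsto_map'_iff]
  simp [Function.comp_def, slope_def_module]

theorem ContinuousLinearMap.opNorm_le_of_dense {𝕜 E F : Type*} [NontriviallyNormedField 𝕜]
    [NormedAddCommGroup E] [NormedSpace 𝕜 E] [NormedAddCommGroup F] [NormedSpace 𝕜 F]
    (f : E →L[𝕜] F) {s : Set E} (hs : Dense s) {C : ℝ} (hC : 0 ≤ C)
    (h : ∀ x ∈ s, ‖f x‖ ≤ C * ‖x‖) : ‖f‖ ≤ C :=
  f.opNorm_le_bound hC fun x =>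
    hs.induction h (isClosed_le (by fun_prop) (by fun_prop)) x

namespace IsC0Semigroup

variable [NormedAddCommGroup X] [NormedSpace ℂ X] {S : ℝ → X →L[ℂ] X}

theorem apply_add (hS : IsC0Semigroup S) {t s : ℝ} (ht : 0 ≤ t) (hs : 0 ≤ s) (x : X) :
    S (t + s) x = S t (S s x) := by
  rw [hS.2.1 t s ht hs, ContinuousLinearMap.comp_apply]

theorem exists_norm_le [CompleteSpace X] (hS : IsC0Semigroup S) (b : ℝ) :
    ∃ M, 1 ≤ M ∧ ∀ t ∈ Icc 0 b, ‖S t‖ ≤ M := by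
  have hbdd : ∀ x : X, ∃ C, ∀ t : Icc 0 b, ‖S t x‖ ≤ C := fun x => by
    obtain ⟨C, hC⟩ := isCompact_Icc.exists_bound_of_continuousOn
      ((hS.2.2 x).mono Icc_subset_Ici_self)
    exact ⟨C, fun t => hC t t.2⟩
  obtain ⟨C, hC⟩ := banach_steinhaus hbdd
  exact ⟨max C 1, le_max_right _ _, fun t ht => (hC ⟨t, ht⟩).trans (le_max_left _ _)⟩

/-- Banach–Steinhaus makes `S` locally bounded, which upgrades strong continuity to joint
continuity of `(t, x) ↦ S t x`. -/
theorem tendsto_apply [CompleteSpace X] (hS : IsC0Semigroup S) {α : Type*} {l : Filter α}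
    {φ : α → ℝ} {y : α → X} {u : ℝ} {x : X} (hu : 0 ≤ u) (hφ : Tendsto φ l (𝓝[Ici 0] u))
    (hy : Tendsto y l (𝓝 x)) : Tendsto (fun a => S (φ a) (y a)) l (𝓝 (S u x)) := by
  obtain ⟨M, -, hM⟩ := hS.exists_norm_le (u + 1)
  have hφM : ∀ᶠ a in l, ‖S (φ a)‖ ≤ M := by
    have : Icc 0 (u + 1) ∈ 𝓝[Ici 0] u := by
      rw [← Ici_inter_Iic]
      exact inter_mem_nhdsWithin _ (Iic_mem_nhds (by linarith))
    filter_upwards [hφ this] with a ha using hM _ ha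
  have hfixed : Tendsto (fun a => S (φ a) x) l (𝓝 (S u x)) :=
    (hS.2.2 x u hu).tendsto.comp hφ
  have hmoving : Tendsto (fun a => S (φ a) (y a - x)) l (𝓝 0) := by
    refine squeeze_zero_norm' (a := fun a => M * ‖y a - x‖) ?_ ?_
    · filter_upwards [hφM] with a ha
      exact (S (φ a)).le_of_opNorm_le ha _
    · simpa using (tendsto_iff_norm_sub_tendsto_zero.mp hy).const_mul M
  simpa using hmoving.add hfixed

theorem continuousOn_apply [CompleteSpace X] (hS : IsC0Semigroup S) {s : Set ℝ} {y : ℝ → X}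
    (hs : s ⊆ Ici 0) (hy : ContinuousOn y s) : ContinuousOn (fun u => S u (y u)) s :=
  fun u hu => hS.tendsto_apply (hs hu)
    (tendsto_nhdsWithin_mono_left hs tendsto_id) ((hy u hu).tendsto)

theorem hasDerivWithinAt_apply [CompleteSpace X] (hS : IsC0Semigroup S) {y : ℝ → X}
    {y' z' : X} {u : ℝ} (hu : 0 ≤ u) (hy : HasDerivWithinAt y y' (Ioi u) u)
    (hz : HasDerivWithinAt (fun r => S r (y u)) z' (Ioi u) u) :
    HasDerivWithinAt (fun r => S r (y r)) (S u y' + z') (Ioi u) u := by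
  rw [hasDerivWithinAt_iff_tendsto_slope' self_notMem_Ioi] at *
  have hφ : Tendsto id (𝓝[Ioi u] u) (𝓝[Ici 0] u) :=
    tendsto_nhdsWithin_mono_left (Ioi_subset_Ici hu) tendsto_id
  refine ((hS.tendsto_apply hu hφ hy).add hz).congr fun v => ?_
  simp only [slope_def_module, id, (S v).map_smul_of_tower, map_sub, ← smul_add]
  abel_nf

end IsC0Semigroup

theorem ContinuousOn.intervalIntegrable_of_nonneg {E : Type*} [NormedAddCommGroup E]
    {f : ℝ → E} (hf : ContinuousOn f (Ici 0)) {a b : ℝ} (ha : 0 ≤ a) (hb : 0 ≤ b) :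
    IntervalIntegrable f volume a b :=
  (hf.mono fun _ hs => le_trans (le_inf ha hb) hs.1).intervalIntegrable

namespace IsGenerator

variable [NormedAddCommGroup X] [NormedSpace ℂ X] {T : ℝ → X →L[ℂ] X} {domA : Set X}
  {A : X → X}

theorem mem_and_eq_of_tendsto (hA : IsGenerator T domA A) {x y : X}
    (h : Tendsto (fun t : ℝ => t⁻¹ • (T t x - x)) (𝓝[>] 0) (𝓝 y)) : x ∈ domA ∧ A x = y :=
  have hx := (hA.1 x).2 ⟨y, h⟩
  ⟨hx, tendsto_nhds_unique (hA.2 x hx) h⟩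

theorem sub_mem (hA : IsGenerator T domA A) {x y : X} (hx : x ∈ domA) (hy : y ∈ domA) :
    x - y ∈ domA ∧ A (x - y) = A x - A y :=
  hA.mem_and_eq_of_tendsto <| ((hA.2 x hx).sub (hA.2 y hy)).congr fun t => by
    rw [← smul_sub, map_sub, sub_sub_sub_comm]

theorem smul_mem (hA : IsGenerator T domA A) {x : X} (hx : x ∈ domA) (c : ℂ) :
    c • x ∈ domA ∧ A (c • x) = c • A x :=
  hA.mem_and_eq_of_tendsto <| ((hA.2 x hx).const_smul c).congr fun t => by
    rw [(T t).map_smul, ← smul_sub, smul_comm]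

theorem apply_mem (hT : IsC0Semigroup T) (hA : IsGenerator T domA A) {x : X} (hx : x ∈ domA)
    {s : ℝ} (hs : 0 ≤ s) : T s x ∈ domA ∧ A (T s x) = T s (A x) := by
  refine hA.mem_and_eq_of_tendsto <| (((T s).continuous.tendsto _).comp (hA.2 x hx)).congr' ?_
  filter_upwards [self_mem_nhdsWithin] with h (hh : 0 < h)
  rw [Function.comp_apply, (T s).map_smul_of_tower, map_sub, ← hT.apply_add hs hh.le,
    ← hT.apply_add hh.le hs, add_comm]

theorem hasDerivWithinAt_Ioi (hT : IsC0Semigroup T) (hA : IsGenerator T domA A) {x : X}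
    (hx : x ∈ domA) {s : ℝ} (hs : 0 ≤ s) :
    HasDerivWithinAt (fun r => T r x) (T s (A x)) (Ioi s) s := by
  obtain ⟨hmem, heq⟩ := hA.apply_mem hT hx hs
  rw [hasDerivWithinAt_Ioi_iff_tendsto_slope_zero, ← heq]
  refine (hA.2 _ hmem).congr' ?_
  filter_upwards [self_mem_nhdsWithin] with h (hh : 0 < h)
  rw [← hT.apply_add hh.le hs, add_comm]

theorem hasDerivWithinAt_Iio [CompleteSpace X] (hT : IsC0Semigroup T)
    (hA : IsGenerator T domA A) {x : X} (hx : x ∈ domA) {s : ℝ} (hs : 0 < s) :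
    HasDerivWithinAt (fun r => T r x) (T s (A x)) (Iio s) s := by
  rw [hasDerivWithinAt_iff_tendsto_slope' self_notMem_Iio]
  have hnear : ∀ᶠ v in 𝓝[<] s, v ∈ Ioo 0 s := Ioo_mem_nhdsLT hs
  have hψ : Tendsto (s - ·) (𝓝[<] s) (𝓝[>] 0) := by
    refine tendsto_nhdsWithin_iff.2 ⟨?_, hnear.mono fun v hv => sub_pos.2 hv.2⟩
    simpa using ((continuous_sub_left s).tendsto s).mono_left nhdsWithin_le_nhds
  have hφ : Tendsto id (𝓝[<] s) (𝓝[Ici 0] s) :=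
    tendsto_nhdsWithin_iff.2 ⟨tendsto_nhdsWithin_of_tendsto_nhds tendsto_id,
      hnear.mono fun v hv => hv.1.le⟩
  refine (hT.tendsto_apply hs.le hφ ((hA.2 x hx).comp hψ)).congr' ?_
  filter_upwards [hnear] with v hv
  rw [Function.comp_apply, id, (T v).map_smul_of_tower, map_sub, ← hT.apply_add hv.1.le
    (sub_pos.2 hv.2).le, add_sub_cancel, slope_def_module, ← neg_sub s v, inv_neg, neg_smul,
    ← smul_neg, neg_sub]

theorem hasDerivAt [CompleteSpace X] (hT : IsC0Semigroup T) (hA : IsGenerator T domA A)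
    {x : X} (hx : x ∈ domA) {s : ℝ} (hs : 0 < s) :
    HasDerivAt (fun r => T r x) (T s (A x)) s := by
  rw [hasDerivAt_iff_tendsto_slope_left_right]
  exact ⟨(hasDerivWithinAt_iff_tendsto_slope' self_notMem_Iio).1
      (hA.hasDerivWithinAt_Iio hT hx hs),
    (hasDerivWithinAt_iff_tendsto_slope' self_notMem_Ioi).1
      (hA.hasDerivWithinAt_Ioi hT hx hs.le)⟩

/-- `x` is the limit of the averages `t⁻¹ ∫₀ᵗ T s x`, and each `∫₀ᵗ T s x` lies in the domain,
with image `T t x - x`. -/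
theorem dense [CompleteSpace X] (hT : IsC0Semigroup T) (hA : IsGenerator T domA A) :
    Dense domA := by
  intro x
  set F : ℝ → X := fun t => ∫ s in (0 : ℝ)..t, T s x
  have horbit : ContinuousOn (fun s => T s x) (Ici 0) := hT.2.2 x
  have hF : ∀ t, 0 ≤ t →
      Tendsto (fun h : ℝ => h⁻¹ • (F (t + h) - F t)) (𝓝[>] 0) (𝓝 (T t x)) := fun t ht => by
    rw [← hasDerivWithinAt_Ioi_iff_tendsto_slope_zero]
    refine (intervalIntegral.integral_hasDerivWithinAt_right (s := Ici t) (t := Ioi t)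
      (horbit.intervalIntegrable_of_nonneg le_rfl ht)
      ((horbit.mono (Ioi_subset_Ici ht)).stronglyMeasurableAtFilter_nhdsWithin
        measurableSet_Ioi t) ((horbit t ht).mono (Ioi_subset_Ici ht))).mono Ioi_subset_Ici_self
  have hF0 := hF 0 le_rfl
  simp only [zero_add, F, intervalIntegral.integral_same, sub_zero, hT.1,
    one_apply_eq_self] at hF0
  have hmem : ∀ t, 0 < t → F t ∈ domA := fun t ht => by
    refine (hA.mem_and_eq_of_tendsto (y := T t x - x) ((hF t ht.le).sub hF0 |>.congr' ?_)).1
    filter_upwards [self_mem_nhdsWithin] with h (hh : 0 < h)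
    have hshift : T h (F t) = F (t + h) - F h := calc
      T h (F t) = ∫ s in (0 : ℝ)..t, T (h + s) x := by
        rw [← (T h).intervalIntegral_comp_comm (horbit.intervalIntegrable_of_nonneg le_rfl ht.le)]
        refine intervalIntegral.integral_congr fun s hs => ?_
        rw [uIcc_of_le ht.le] at hs
        exact (hT.apply_add hh.le hs.1 x).symm
      _ = F (t + h) - F h := by
        rw [intervalIntegral.integral_comp_add_left (fun s => T s x), add_zero, add_comm h,
          intervalIntegral.integral_interval_sub_left
            (horbit.intervalIntegrable_of_nonneg le_rfl (by positivity))
            (horbit.intervalIntegrable_of_nonneg le_rfl hh.le)]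
    rw [hshift, ← smul_sub]
    simp only [F]
    abel_nf
  refine mem_closure_of_tendsto hF0 ?_
  filter_upwards [self_mem_nhdsWithin] with t (ht : 0 < t)
  rw [RCLike.real_smul_eq_coe_smul (K := ℂ)]
  exact (hA.smul_mem (hmem t ht) _).1

end IsGenerator

theorem ContinuousOn.comp_const_sub_Icc {E : Type*} [TopologicalSpace E] {f : ℝ → E}
    (hf : ContinuousOn f (Ici 0)) (t : ℝ) : ContinuousOn (fun u => f (t - u)) (Icc 0 t) :=
  hf.comp (continuousOn_const.sub continuousOn_id) fun _ hu => sub_nonneg.2 hu.2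

namespace IsGraphBoundedOp

variable [NormedAddCommGroup X] [NormedSpace ℂ X] {T : ℝ → X →L[ℂ] X} {domA : Set X}
  {A D : X → X}

theorem map_sub (hD : IsGraphBoundedOp domA A D) (hA : IsGenerator T domA A) {x y : X}
    (hx : x ∈ domA) (hy : y ∈ domA) : D (x - y) = D x - D y := by
  have h := hD.1 (x - y) (hA.sub_mem hx hy).1 y hy
  rw [sub_add_cancel] at h
  rw [h, add_sub_cancel_right]

theorem continuousOn_comp_orbit (hD : IsGraphBoundedOp domA A D) (hT : IsC0Semigroup T)
    (hA : IsGenerator T domA A) {x : X} (hx : x ∈ domA) :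
    ContinuousOn (fun s => D (T s x)) (Ici 0) := by
  obtain ⟨C, hC⟩ := hD.2.2
  intro s₀ hs₀
  rw [ContinuousWithinAt, tendsto_iff_norm_sub_tendsto_zero]
  have hbound : ∀ s ∈ Ici (0 : ℝ), ‖D (T s x) - D (T s₀ x)‖ ≤
      C * (‖T s x - T s₀ x‖ + ‖T s (A x) - T s₀ (A x)‖) := fun s hs => by
    obtain ⟨hs_mem, hs_eq⟩ := hA.apply_mem hT hx hs
    obtain ⟨hs₀_mem, hs₀_eq⟩ := hA.apply_mem hT hx hs₀
    obtain ⟨hsub_mem, hsub_eq⟩ := hA.sub_mem hs_mem hs₀_mem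
    rw [← hD.map_sub hA hs_mem hs₀_mem, ← hs_eq, ← hs₀_eq, ← hsub_eq]
    exact hC _ hsub_mem
  have hlim : Tendsto (fun s => C * (‖T s x - T s₀ x‖ + ‖T s (A x) - T s₀ (A x)‖))
      (𝓝[Ici 0] s₀) (𝓝 0) := by
    simpa using ((tendsto_iff_norm_sub_tendsto_zero.1 (hT.2.2 x s₀ hs₀).tendsto).add
      (tendsto_iff_norm_sub_tendsto_zero.1 (hT.2.2 (A x) s₀ hs₀).tendsto)).const_mul C
  exact squeeze_zero' (Eventually.of_forall fun _ => norm_nonneg _)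
    (eventually_mem_nhdsWithin.mono hbound) hlim

theorem integral_norm_comp_orbit_le (hD : IsGraphBoundedOp domA A D) (hT : IsC0Semigroup T)
    (hA : IsGenerator T domA A) {t₀ q M : ℝ} (ht₀ : 0 ≤ t₀) (hq : 0 ≤ q)
    (hDq : ∀ x ∈ domA, ∫ s in (0 : ℝ)..t₀, ‖D (T s x)‖ ≤ q * ‖x‖) {n : ℕ}
    (hM : ∀ t ∈ Icc 0 (n * t₀), ‖T t‖ ≤ M) {x : X} (hx : x ∈ domA) {t : ℝ}
    (ht : t ∈ Icc 0 (n * t₀)) : ∫ s in (0 : ℝ)..t, ‖D (T s x)‖ ≤ n * q * M * ‖x‖ := by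
  have hint : ∀ a b : ℝ, 0 ≤ a → 0 ≤ b →
      IntervalIntegrable (fun s => ‖D (T s x)‖) volume a b := fun _ _ =>
    (hD.continuousOn_comp_orbit hT hA hx).norm.intervalIntegrable_of_nonneg
  have hblock : ∀ k < n, ∫ s in (k * t₀)..((k + 1 : ℕ) * t₀), ‖D (T s x)‖ ≤ q * M * ‖x‖ := by
    intro k hk
    have hk₀ : (0 : ℝ) ≤ k * t₀ := by positivity
    have hkn : (k : ℝ) * t₀ ≤ n * t₀ := by gcongr
    obtain ⟨hmem, -⟩ := hA.apply_mem hT hx hk₀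
    calc ∫ s in (k * t₀)..((k + 1 : ℕ) * t₀), ‖D (T s x)‖
        = ∫ s in (0 : ℝ)..t₀, ‖D (T (s + k * t₀) x)‖ := by
          rw [intervalIntegral.integral_comp_add_right (fun s => ‖D (T s x)‖), zero_add,
            Nat.cast_succ, add_one_mul, add_comm t₀]
      _ = ∫ s in (0 : ℝ)..t₀, ‖D (T s (T (k * t₀) x))‖ := by
          refine intervalIntegral.integral_congr fun s hs => ?_
          rw [uIcc_of_le ht₀] at hs
          simp only [hT.apply_add hs.1 hk₀]
      _ ≤ q * ‖T (k * t₀) x‖ := hDq _ hmem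
      _ ≤ q * M * ‖x‖ := by
          rw [mul_assoc]
          exact mul_le_mul_of_nonneg_left ((T _).le_of_opNorm_le (hM _ ⟨hk₀, hkn⟩) x) hq
  calc ∫ s in (0 : ℝ)..t, ‖D (T s x)‖ ≤ ∫ s in (0 : ℝ)..(n * t₀), ‖D (T s x)‖ :=
        intervalIntegral.integral_mono_interval le_rfl ht.1 ht.2
          (Eventually.of_forall fun _ => norm_nonneg _) (hint _ _ le_rfl (by positivity))
    _ = ∑ k ∈ Finset.range n, ∫ s in (k * t₀)..((k + 1 : ℕ) * t₀), ‖D (T s x)‖ := by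
        rw [intervalIntegral.sum_integral_adjacent_intervals (a := fun k : ℕ => k * t₀)
          fun k _ => hint _ _ (by positivity) (by positivity)]
        simp
    _ ≤ ∑ _k ∈ Finset.range n, q * M * ‖x‖ := Finset.sum_le_sum fun k hk =>
        hblock k (Finset.mem_range.1 hk)
    _ = n * q * M * ‖x‖ := by simp [mul_assoc]

end IsGraphBoundedOp

namespace IsGenerator

variable [NormedAddCommGroup X] [NormedSpace ℂ X] [CompleteSpace X] {T S : ℝ → X →L[ℂ] X}
  {domA : Set X} {A D : X → X}

theorem apply_sub_eq_integral (hT : IsC0Semigroup T) (hA : IsGenerator T domA A)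
    (hD : IsGraphBoundedOp domA A D) (hS : IsC0Semigroup S)
    (hB : IsGenerator S domA (fun x => A x + D x)) {x : X} (hx : x ∈ domA) {t : ℝ}
    (ht : 0 ≤ t) : S t x - T t x = ∫ u in (0 : ℝ)..t, S u (D (T (t - u) x)) := by
  have hderiv : ∀ u ∈ Ioo 0 t, HasDerivWithinAt (fun u => S u (T (t - u) x))
      (S u (D (T (t - u) x))) (Ioi u) u := by
    intro u hu
    have htu : 0 < t - u := sub_pos.2 hu.2
    obtain ⟨hmem, heq⟩ := hA.apply_mem hT hx htu.le
    have hy : HasDerivWithinAt (fun r => T (t - r) x) (-T (t - u) (A x)) (Ioi u) u := by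
      simpa [Function.comp_def] using
        ((hA.hasDerivAt hT hx htu).scomp u ((hasDerivAt_id u).const_sub t)).hasDerivWithinAt
    convert hS.hasDerivWithinAt_apply hu.1.le hy (hB.hasDerivWithinAt_Ioi hS hmem hu.1.le)
      using 1
    rw [heq, ← map_add, neg_add_cancel_left]
  rw [intervalIntegral.integral_eq_sub_of_hasDeriv_right_of_le ht
    (hS.continuousOn_apply Icc_subset_Ici_self ((hT.2.2 x).comp_const_sub_Icc t)) hderiv
    ((hS.continuousOn_apply Icc_subset_Ici_self
      ((hD.continuousOn_comp_orbit hT hA hx).comp_const_sub_Icc t)).intervalIntegrable_of_Icc ht)]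
  simp [hT.1, hS.1]

theorem norm_sub_le_of_integral_le (hT : IsC0Semigroup T) (hA : IsGenerator T domA A)
    (hD : IsGraphBoundedOp domA A D) (hS : IsC0Semigroup S)
    (hB : IsGenerator S domA (fun x => A x + D x)) {t N J : ℝ} (ht : 0 ≤ t)
    (hN : ∀ u ∈ Icc 0 t, ‖S u‖ ≤ N) (hJ : 0 ≤ J)
    (hDJ : ∀ x ∈ domA, ∫ u in (0 : ℝ)..t, ‖D (T u x)‖ ≤ J * ‖x‖) : ‖T t - S t‖ ≤ N * J := by
  have hN₀ : 0 ≤ N := (norm_nonneg _).trans (hN 0 ⟨le_rfl, ht⟩)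
  refine (T t - S t).opNorm_le_of_dense (hA.dense hT) (by positivity) fun x hx => ?_
  have hDx := ((hD.continuousOn_comp_orbit hT hA hx).comp_const_sub_Icc t).norm
  calc ‖(T t - S t) x‖ = ‖∫ u in (0 : ℝ)..t, S u (D (T (t - u) x))‖ := by
        rw [← apply_sub_eq_integral hT hA hD hS hB hx ht, ← norm_neg, sub_apply, neg_sub]
    _ ≤ ∫ u in (0 : ℝ)..t, N * ‖D (T (t - u) x)‖ :=
        intervalIntegral.norm_integral_le_of_norm_le ht
          (Eventually.of_forall fun u hu => (S u).le_of_opNorm_le (hN u (Ioc_subset_Icc_self hu)) _)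
          ((continuousOn_const.mul hDx).intervalIntegrable_of_Icc ht)
    _ = N * ∫ u in (0 : ℝ)..t, ‖D (T u x)‖ := by
        rw [intervalIntegral.integral_const_mul,
          intervalIntegral.integral_comp_sub_left (fun u => ‖D (T u x)‖), sub_self, sub_zero]
    _ ≤ N * J * ‖x‖ := by
        rw [mul_assoc]
        exact mul_le_mul_of_nonneg_left (hDJ x hx) hN₀

end IsGenerator

theorem norm_sub_le_two_mul_of_forall_bound {𝕜 E F : Type*} [NontriviallyNormedField 𝕜]
    [NormedAddCommGroup E] [NormedSpace 𝕜 E] [NormedAddCommGroup F] [NormedSpace 𝕜 F]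
    {T S : ℝ → E →L[𝕜] F} {s : Set ℝ} {M J : ℝ} (hM : ∀ t ∈ s, ‖T t‖ ≤ M) (hJ₀ : 0 ≤ J)
    (hJ : J ≤ 1 / 2) (hS : ∃ K, ∀ t ∈ s, ‖S t‖ ≤ K)
    (hclose : ∀ N, (∀ t ∈ s, ‖S t‖ ≤ N) → ∀ t ∈ s, ‖T t - S t‖ ≤ N * J) :
    ∀ t ∈ s, ‖T t - S t‖ ≤ 2 * M * J := by
  intro t ht
  obtain ⟨K, hK⟩ := hS
  have hbdd : BddAbove ((‖S ·‖) '' s) := ⟨K, forall_mem_image.2 hK⟩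
  set N := sSup ((‖S ·‖) '' s)
  have hN : ∀ u ∈ s, ‖S u‖ ≤ N := fun u hu => le_csSup hbdd (mem_image_of_mem _ hu)
  have hN₀ : 0 ≤ N := (norm_nonneg _).trans (hN t ht)
  have hNM : N ≤ M + N * J := csSup_le ⟨_, mem_image_of_mem _ ht⟩ <| forall_mem_image.2
    fun u hu => calc ‖S u‖ ≤ ‖T u‖ + ‖T u - S u‖ := norm_le_norm_add_norm_sub _ _
      _ ≤ M + N * J := add_le_add (hM u hu) (hclose N hN u hu)
  calc ‖T t - S t‖ ≤ N * J := hclose N hN t ht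
    _ ≤ 2 * M * J := mul_le_mul_of_nonneg_right (by nlinarith) hJ₀

theorem semigroup_close_under_MV_perturbation_general
    [NormedAddCommGroup X] [NormedSpace ℂ X] [CompleteSpace X]
    (T : ℝ → X →L[ℂ] X) (hT : IsC0Semigroup T)
    (domA : Set X) (A : X → X) (hA : IsGenerator T domA A)
    (t₀ : ℝ) (ht₀ : 0 < t₀) (ε τ : ℝ) (hε : 0 < ε) :
    ∃ q : ℝ, q ∈ Set.Ioo (0 : ℝ) 1 ∧
      ∀ D : X → X, IsGraphBoundedOp domA A D →
        (∀ x ∈ domA, (∫ s in (0 : ℝ)..t₀, ‖D (T s x)‖) ≤ q * ‖x‖) →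
        ∀ TD : ℝ → X →L[ℂ] X,
          IsC0Semigroup TD → IsGenerator TD domA (fun x => A x + D x) →
          ∀ t ∈ Set.Icc (0 : ℝ) τ, ‖T t - TD t‖ < ε := by
  obtain ⟨n, hτn⟩ : ∃ n : ℕ, τ ≤ n * t₀ := ⟨⌈τ / t₀⌉₊, (div_le_iff₀ ht₀).1 (Nat.le_ceil _)⟩
  obtain ⟨M, hM₁, hM⟩ := hT.exists_norm_le (n * t₀)
  have hM₀ : 0 < M := by linarith
  set δ := min (1 / 2) (ε / (4 * M))
  have hδ : 0 < δ := lt_min (by norm_num) (by positivity)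
  have hq : δ / ((n + 1) * M) ≤ δ := div_le_self hδ.le (by nlinarith)
  have hJ : n * (δ / ((n + 1) * M)) * M ≤ δ := by
    rw [show n * (δ / ((n + 1) * M)) * M = n / (n + 1) * δ by field_simp]
    exact mul_le_of_le_one_left hδ.le ((div_le_one (by positivity : (0 : ℝ) < n + 1)).2
      (by linarith))
  refine ⟨δ / ((n + 1) * M), ⟨by positivity, hq.trans_lt ((min_le_left _ _).trans_lt
    (by norm_num))⟩, fun D hD hDq TD hTD hTDgen t ht => ?_⟩
  obtain ⟨K, -, hK⟩ := hTD.exists_norm_le τ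
  have hclose := norm_sub_le_two_mul_of_forall_bound (fun s hs => hM s ⟨hs.1, hs.2.trans hτn⟩)
    hδ.le (min_le_left _ _) ⟨K, hK⟩ fun N hN s hs =>
      hA.norm_sub_le_of_integral_le hT hD hTD hTDgen hs.1
        (fun u hu => hN u ⟨hu.1, hu.2.trans hs.2⟩) hδ.le fun x hx =>
        (hD.integral_norm_comp_orbit_le hT hA ht₀.le (by positivity) hDq
          hM hx ⟨hs.1, hs.2.trans hτn⟩).trans (mul_le_mul_of_nonneg_right hJ (norm_nonneg x))
  calc ‖T t - TD t‖ ≤ 2 * M * δ := hclose t ht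
    _ ≤ 2 * M * (ε / (4 * M)) := by gcongr; exact min_le_right _ _
    _ < ε := by field_simp; linarith

/-- Uniform-operator-topology continuity of the semigroup with respect to
Miyadera–Voigt perturbations of the generator. -/
theorem semigroup_close_under_MV_perturbation
    [NormedAddCommGroup X] [NormedSpace ℂ X] [CompleteSpace X]
    (T : ℝ → X →L[ℂ] X) (hT : IsC0Semigroup T)
    (domA : Set X) (A : X → X) (hA : IsGenerator T domA A)
    (t₀ : ℝ) (ht₀ : 0 < t₀) (ε τ : ℝ) (hε : 0 < ε) (hτ : 0 < τ) :
    ∃ q : ℝ, q ∈ Set.Ioo (0 : ℝ) 1 ∧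
      ∀ D : X → X, IsGraphBoundedOp domA A D →
        (∀ x ∈ domA, (∫ s in (0 : ℝ)..t₀, ‖D (T s x)‖) ≤ q * ‖x‖) →
        ∀ TD : ℝ → X →L[ℂ] X,
          IsC0Semigroup TD → IsGenerator TD domA (fun x => A x + D x) →
          ∀ t ∈ Set.Icc (0 : ℝ) τ, ‖T t - TD t‖ < ε :=
  semigroup_close_under_MV_perturbation_general T hT domA A hA t₀ ht₀ ε τ hε
end

section
/- Let T and T_D be strongly continuous semigroups on X, let t₀ > 0 and τ > 0 with n t₀ ≤ τ < (n+1) t₀ for some integer n ≥ 1, and suppose ‖T(t)‖ ≤ M for all t ∈ [0, τ] and ‖T(t) − T_D(t)‖ ≤ q₀ for all t ∈ [0, t₀], where q₀ > 0. Define the sequence q_k := (M + q₀) q_{k−1} + M q₀ for k ≥ 1. Then ‖T(t) − T_D(t)‖ ≤ q_n for all t ∈ [0, τ]. -/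
open MeasureTheory Filter Set
open scoped Topology Real

variable {X : Type*}

/-- Iterated estimate for the difference of two semigroups on `[0,τ]` with
`n t₀ ≤ τ < (n+1) t₀`. -/
theorem semigroup_diff_bound_iterated
    [NormedAddCommGroup X] [NormedSpace ℂ X] [CompleteSpace X]
    (T TD : ℝ → X →L[ℂ] X) (hT : IsC0Semigroup T) (hTD : IsC0Semigroup TD)
    (t₀ τ M q₀ : ℝ) (ht₀ : 0 < t₀)
    (n : ℕ) (hn : 1 ≤ n) (hτ₁ : (n : ℝ) * t₀ ≤ τ) (hτ₂ : τ < ((n : ℝ) + 1) * t₀)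
    (hM : ∀ t ∈ Set.Icc (0 : ℝ) τ, ‖T t‖ ≤ M)
    (hq₀ : 0 < q₀) (h0 : ∀ t ∈ Set.Icc (0 : ℝ) t₀, ‖T t - TD t‖ ≤ q₀)
    (qs : ℕ → ℝ) (hqs0 : qs 0 = q₀)
    (hqsk : ∀ k : ℕ, qs (k + 1) = (M + q₀) * qs k + M * q₀) :
    ∀ t ∈ Set.Icc (0 : ℝ) τ, ‖T t - TD t‖ ≤ qs n := by
  have hn1 : (1 : ℝ) ≤ (n : ℝ) := by exact_mod_cast hn
  have ht₀τ : t₀ ≤ τ := le_trans (by nlinarith) hτ₁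
  have hM0 : 0 ≤ M := le_trans (norm_nonneg _) (hM t₀ ⟨ht₀.le, ht₀τ⟩)
  have hqnn : ∀ k, 0 ≤ qs k := by
    intro k
    induction k with
    | zero => rw [hqs0]; exact hq₀.le
    | succ k ih => rw [hqsk]; nlinarith
  rcases subsingleton_or_nontrivial X with hX | hX
  · intro t _
    have : T t - TD t = 0 := Subsingleton.elim _ _
    simp [this, hqnn n]
  · have hM1 : 1 ≤ M := by
      have := hM 0 ⟨le_refl _, le_trans ht₀.le ht₀τ⟩
      rwa [hT.1, norm_one] at this
    have hmono : ∀ k, qs k ≤ qs (k + 1) := by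
      intro k; rw [hqsk]; nlinarith [hqnn k]
    have key : ∀ k : ℕ, ∀ t ∈ Set.Icc (0 : ℝ) τ, t ≤ ((k : ℝ) + 1) * t₀ →
        ‖T t - TD t‖ ≤ qs k := by
      intro k
      induction k with
      | zero =>
        intro t ht hle
        rw [hqs0]
        exact h0 t ⟨ht.1, by simpa using hle⟩
      | succ k ih =>
        intro t ht hle
        rcases le_or_gt t (((k : ℝ) + 1) * t₀) with h | h
        · exact (ih t ht h).trans (hmono k)
        · set s := t - t₀ with hs
          have hkt : (0 : ℝ) ≤ (k : ℝ) * t₀ := by positivity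
          have hs0 : 0 ≤ s := by nlinarith
          have hsτ : s ≤ τ := by nlinarith [ht.2]
          have hsle : s ≤ ((k : ℝ) + 1) * t₀ := by push_cast at hle ⊢; nlinarith
          have hts : t = t₀ + s := by ring
          have hT' : T t = (T t₀).comp (T s) := by
            rw [hts]; exact hT.2.1 t₀ s ht₀.le hs0
          have hTD' : TD t = (TD t₀).comp (TD s) := by
            rw [hts]; exact hTD.2.1 t₀ s ht₀.le hs0
          have hdecomp : T t - TD t
              = (T t₀).comp (T s - TD s) + (T t₀ - TD t₀).comp (TD s) := by
            rw [hT', hTD']; ext x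
            simp [ContinuousLinearMap.comp_apply]
          have h1 : ‖T t₀‖ ≤ M := hM t₀ ⟨ht₀.le, ht₀τ⟩
          have h2 : ‖T s - TD s‖ ≤ qs k := ih s ⟨hs0, hsτ⟩ hsle
          have h3 : ‖T t₀ - TD t₀‖ ≤ q₀ := h0 t₀ ⟨ht₀.le, le_refl _⟩
          have h4 : ‖TD s‖ ≤ M + qs k := by
            calc ‖TD s‖ = ‖T s - (T s - TD s)‖ := by rw [sub_sub_cancel]
              _ ≤ ‖T s‖ + ‖T s - TD s‖ := norm_sub_le _ _
              _ ≤ M + qs k := add_le_add (hM s ⟨hs0, hsτ⟩) h2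
          calc ‖T t - TD t‖
              ≤ ‖(T t₀).comp (T s - TD s)‖ + ‖(T t₀ - TD t₀).comp (TD s)‖ := by
                rw [hdecomp]; exact norm_add_le _ _
            _ ≤ ‖T t₀‖ * ‖T s - TD s‖ + ‖T t₀ - TD t₀‖ * ‖TD s‖ :=
                add_le_add (ContinuousLinearMap.opNorm_comp_le _ _)
                  (ContinuousLinearMap.opNorm_comp_le _ _)
            _ ≤ M * qs k + q₀ * (M + qs k) := by
                have := norm_nonneg (T s - TD s)
                have := norm_nonneg (T t₀ - TD t₀)
                have := norm_nonneg (TD s)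
                nlinarith [hqnn k]
            _ = qs (k + 1) := by rw [hqsk]; ring
    intro t ht
    exact key n t ht (le_of_lt (lt_of_le_of_lt ht.2 hτ₂))
end

section
/- Let A : dom(A) ⊆ X → X be a linear operator, δ₂ ∈ (0, π/2], and C > 0, and suppose every λ ∈ closure(Σ_{π/2+δ₂}) \ {0} belongs to ρ(A) with ‖R(λ,A)‖ ≤ C/|λ|. Then for every ν ∈ (0,1) and every r > 0 there exist α, β > 0 such that ‖D R(λ,A)‖ ≤ ν for every D ∈ P_{α,β}(A) and every λ ∈ closure(Σ_{π/2+δ₂}) with |λ| ≥ 1/r. -/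
open MeasureTheory Filter Set
open scoped Topology Real

variable {X : Type*}

/-- The sector `Σ_δ = {z ∈ ℂ \ {0} : |arg z| ≤ δ}`. -/
def CSector (δ : ℝ) : Set ℂ := {z : ℂ | z ≠ 0 ∧ |Complex.arg z| ≤ δ}

/-- `S` is an analytic extension of the semigroup `T` making it an analytic
semigroup of angle `δ`. -/
def IsAnalyticSG [NormedAddCommGroup X] [NormedSpace ℂ X]
    (T : ℝ → X →L[ℂ] X) (δ : ℝ) (S : ℂ → X →L[ℂ] X) : Prop :=
  (∀ t : ℝ, 0 ≤ t → S (t : ℂ) = T t) ∧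
  DifferentiableOn ℂ S {z : ℂ | z ≠ 0 ∧ |Complex.arg z| < δ} ∧
  (∀ z ∈ CSector δ, ∀ w ∈ CSector δ, S (z + w) = (S z).comp (S w)) ∧
  (∀ δ' : ℝ, 0 < δ' → δ' < δ →
    (∃ C : ℝ, ∀ z ∈ CSector δ', ‖z‖ ≤ 1 → ‖S z‖ ≤ C) ∧
    (∀ x : X, Tendsto (fun z : ℂ => S z x) (𝓝[CSector δ'] (0 : ℂ)) (𝓝 x)))

/-- `D : dom D ⊆ X → X` is a relatively `A`-bounded perturbation with constants
`α, β`, i.e. `D ∈ P_{α,β}(A)`. -/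
def RelABounded [NormedAddCommGroup X] [NormedSpace ℂ X]
    (domA : Set X) (A : X → X) (α β : ℝ) (domD : Set X) (D : X → X) : Prop :=
  domA ⊆ domD ∧
  (∀ x ∈ domD, ∀ y ∈ domD, D (x + y) = D x + D y) ∧
  (∀ (c : ℂ), ∀ x ∈ domD, D (c • x) = c • D x) ∧
  (∀ x ∈ domA, ‖D x‖ ≤ α * ‖A x‖ + β * ‖x‖)

/-- `R` is the (bounded) resolvent operator `R(λ, A) = (λ I - A)⁻¹` of the linear
operator `A` with domain `domA`; in particular `λ ∈ ρ(A)`. -/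
def IsResolvent [NormedAddCommGroup X] [NormedSpace ℂ X]
    (domA : Set X) (A : X → X) (lam : ℂ) (R : X →L[ℂ] X) : Prop :=
  (∀ x : X, R x ∈ domA) ∧
  (∀ x : X, lam • R x - A (R x) = x) ∧
  (∀ x ∈ domA, R (lam • x - A x) = x)

/-- If `A` is sectorial with resolvent bound `C/|λ|` on the closed sector of angle
`π/2 + δ₂`, then for every `ν ∈ (0,1)` and `r > 0` there are `α, β > 0` such that
`‖D R(λ,A)‖ ≤ ν` for every `D ∈ P_{α,β}(A)` and every `λ` in the closed sector
with `|λ| ≥ 1/r`. -/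
theorem DR_small_on_sector
    [NormedAddCommGroup X] [NormedSpace ℂ X] [CompleteSpace X]
    (domA : Set X) (A : X → X)
    (δ₂ : ℝ) (hδ₂₀ : 0 < δ₂) (hδ₂π : δ₂ ≤ π / 2)
    (C : ℝ) (hC : 0 < C)
    (hres : ∀ lam ∈ closure (CSector (π / 2 + δ₂)) \ {(0 : ℂ)},
      ∃ R : X →L[ℂ] X, IsResolvent domA A lam R ∧ ‖R‖ ≤ C / ‖lam‖) :
    ∀ ν ∈ Set.Ioo (0 : ℝ) 1, ∀ r : ℝ, 0 < r →
      ∃ α : ℝ, 0 < α ∧ ∃ β : ℝ, 0 < β ∧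
        ∀ (domD : Set X) (D : X → X), RelABounded domA A α β domD D →
          ∀ lam ∈ closure (CSector (π / 2 + δ₂)), 1 / r ≤ ‖lam‖ →
            ∀ R : X →L[ℂ] X, IsResolvent domA A lam R →
              ∀ x : X, ‖D (R x)‖ ≤ ν * ‖x‖ := by
  intro ν hν r hr
  obtain ⟨hν0, hν1⟩ := hν
  have hC1 : (0:ℝ) < C + 1 := by linarith
  refine ⟨ν / (2 * (C + 1)), by positivity, ν / (2 * C * r), by positivity, ?_⟩
  intro domD D hD lam hlam hlamr R hR x
  have hlam0 : (0:ℝ) < ‖lam‖ := lt_of_lt_of_le (by positivity) hlamr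
  have hlamne : lam ≠ 0 := by
    intro h; simp [h] at hlam0
  obtain ⟨R', hR', hR'norm⟩ := hres lam ⟨hlam, by simpa using hlamne⟩
  have hRR' : ∀ y : X, R y = R' y := by
    intro y
    have h1 : lam • R y - A (R y) = y := hR.2.1 y
    have := hR'.2.2 (R y) (hR.1 y)
    rw [h1] at this
    exact this.symm
  have hRx : ‖R x‖ ≤ C / ‖lam‖ * ‖x‖ := by
    rw [hRR' x]
    calc ‖R' x‖ ≤ ‖R'‖ * ‖x‖ := R'.le_opNorm x
    _ ≤ C / ‖lam‖ * ‖x‖ := mul_le_mul_of_nonneg_right hR'norm (norm_nonneg x)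
  have key : ‖lam‖ * (C / ‖lam‖ * ‖x‖) = C * ‖x‖ := by
    field_simp
  have hARx : ‖A (R x)‖ ≤ (C + 1) * ‖x‖ := by
    set y := R x with hy
    have h1 : A y = lam • y - x := by
      have h := hR.2.1 x
      rw [← h]; abel
    rw [h1]
    calc ‖lam • y - x‖ ≤ ‖lam • R x‖ + ‖x‖ := norm_sub_le _ _
    _ = ‖lam‖ * ‖y‖ + ‖x‖ := by rw [norm_smul]
    _ ≤ ‖lam‖ * (C / ‖lam‖ * ‖x‖) + ‖x‖ := by
        have := mul_le_mul_of_nonneg_left hRx (le_of_lt hlam0)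
        linarith
    _ = (C + 1) * ‖x‖ := by rw [key]; ring
  have hRx2 : ‖R x‖ ≤ C * r * ‖x‖ := by
    refine hRx.trans ?_
    have hinv : 1 / ‖lam‖ ≤ r := by
      rw [div_le_iff₀ hlam0]
      have h2 : (1/r) * r ≤ ‖lam‖ * r :=
        mul_le_mul_of_nonneg_right hlamr hr.le
      have h3 : (1:ℝ) = (1/r) * r := by field_simp
      nlinarith [mul_comm r ‖lam‖]
    have : C / ‖lam‖ ≤ C * r := by
      rw [div_eq_mul_one_div]
      nlinarith [hC.le]
    exact mul_le_mul_of_nonneg_right this (norm_nonneg x)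
  have hDbound := hD.2.2.2 (R x) (hR.1 x)
  calc ‖D (R x)‖ ≤ ν / (2 * (C + 1)) * ‖A (R x)‖ + ν / (2 * C * r) * ‖R x‖ := hDbound
  _ ≤ ν / (2 * (C + 1)) * ((C + 1) * ‖x‖) + ν / (2 * C * r) * (C * r * ‖x‖) := by
      gcongr <;> positivity
  _ = ν * ‖x‖ := by field_simp; ring
end
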